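/- arXiv:2604.21905 — 3 statements merged into one kernel-verified Lean document; each statement's English description precedes it below -/
import Mathlib

section
/- For full-column-rank X ∈ ℝ^{m×r} and Y ∈ ℝ^{n×r}, the ScaledGD Riemannian metric g_{(X,Y)}((ξ_X, ξ_Y), (φ_X, φ_Y)) := ⟨ξ_X (YᵀY), φ_X⟩_F + ⟨ξ_Y (XᵀX), φ_Y⟩_F is gauge-invariant: for any invertible Q ∈ ℝ^{r×r}, with X̃ = XQ, Ỹ = YQ^{−T}, and tangent vectors pushed forward by ξ̃_X = ξ_X Q, ξ̃_Y = ξ_Y Q^{−T} (similarly for φ), one has g_{(X̃,Ỹ)}((ξ̃_X, ξ̃_Y), (φ̃_X, φ̃_Y)) = g_{(X,Y)}((ξ_X, ξ_Y), (φ_X, φ_Y)). -/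
/-!
Under `X ↦ XP`, `Y ↦ YS` with `P Sᵀ = 1`, the Gram weight `YᵀY` becomes `Sᵀ (YᵀY) S`, and the
pushed-forward tangent vector `ξ P` absorbs the factor `Sᵀ` on the left, leaving `ξ (YᵀY) S`.
The remaining `S` cancels against the `P` carried by `φ P` inside the trace, by cyclicity.
The condition `P Sᵀ = 1` is symmetric in `P` and `S`, so the same computation handles the
`Y`-term; the gauge action is `(P, S) = (Q, Q⁻ᵀ)`.
-/

open Matrix

section

variable {ι κ ρ R : Type*} [Fintype ι] [Fintype κ] [Fintype ρ] [CommRing R]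

theorem gram_mul (C : Matrix κ ρ R) (S : Matrix ρ ρ R) :
    (C * S)ᵀ * (C * S) = Sᵀ * (Cᵀ * C) * S := by
  simp only [transpose_mul, Matrix.mul_assoc]

def scaledGDMetric (X ξX φX : Matrix ι ρ R) (Y ξY φY : Matrix κ ρ R) : R :=
  ((ξX * (Yᵀ * Y))ᵀ * φX).trace + ((ξY * (Xᵀ * X))ᵀ * φY).trace

variable [DecidableEq ρ]

theorem trace_weighted_inner_congr_mul (A B : Matrix ι ρ R) (G P S : Matrix ρ ρ R)
    (h : P * Sᵀ = 1) :
    ((A * P * (Sᵀ * G * S))ᵀ * (B * P)).trace = ((A * G)ᵀ * B).trace := by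
  have hweight : A * P * (Sᵀ * G * S) = A * G * S := by
    rw [Matrix.mul_assoc, ← Matrix.mul_assoc P, ← Matrix.mul_assoc P, h, Matrix.one_mul,
      Matrix.mul_assoc]
  calc ((A * P * (Sᵀ * G * S))ᵀ * (B * P)).trace
      = (Sᵀ * ((A * G)ᵀ * B * P)).trace := by
        rw [hweight, transpose_mul, Matrix.mul_assoc, Matrix.mul_assoc]
    _ = ((A * G)ᵀ * B * (P * Sᵀ)).trace := by
        rw [trace_mul_comm, Matrix.mul_assoc]
    _ = ((A * G)ᵀ * B).trace := by rw [h, Matrix.mul_one]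

theorem scaledGDMetric_mul_mul (X ξX φX : Matrix ι ρ R) (Y ξY φY : Matrix κ ρ R)
    (P S : Matrix ρ ρ R) (hPS : P * Sᵀ = 1) :
    scaledGDMetric (X * P) (ξX * P) (φX * P) (Y * S) (ξY * S) (φY * S)
      = scaledGDMetric X ξX φX Y ξY φY := by
  have hSP : S * Pᵀ = 1 := by
    simpa only [transpose_mul, transpose_transpose, transpose_one] using congrArg transpose hPS
  rw [scaledGDMetric, scaledGDMetric, gram_mul, gram_mul,
    trace_weighted_inner_congr_mul _ _ _ _ _ hPS, trace_weighted_inner_congr_mul _ _ _ _ _ hSP]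

end

theorem scaledgd_metric_gauge_invariant_general (m n r : ℕ)
    (X : Matrix (Fin m) (Fin r) ℝ) (Y : Matrix (Fin n) (Fin r) ℝ)
    (Q : Matrix (Fin r) (Fin r) ℝ) (hQ : IsUnit Q.det)
    (ξX φX : Matrix (Fin m) (Fin r) ℝ) (ξY φY : Matrix (Fin n) (Fin r) ℝ) :
    ((ξX * Q * ((Y * Q⁻¹ᵀ)ᵀ * (Y * Q⁻¹ᵀ)))ᵀ * (φX * Q)).trace
      + ((ξY * Q⁻¹ᵀ * ((X * Q)ᵀ * (X * Q)))ᵀ * (φY * Q⁻¹ᵀ)).trace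
    = ((ξX * (Yᵀ * Y))ᵀ * φX).trace + ((ξY * (Xᵀ * X))ᵀ * φY).trace := by
  have hPS : Q * Q⁻¹ᵀᵀ = 1 := by rw [transpose_transpose, mul_nonsing_inv Q hQ]
  exact scaledGDMetric_mul_mul X ξX φX Y ξY φY Q Q⁻¹ᵀ hPS

/-- Gauge invariance of the ScaledGD Riemannian metric
`g((ξ_X,ξ_Y),(φ_X,φ_Y)) = ⟨ξ_X(YᵀY), φ_X⟩_F + ⟨ξ_Y(XᵀX), φ_Y⟩_F`
under `X̃ = XQ`, `Ỹ = YQ^{−T}`, with tangent vectors pushed forward accordingly. -/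
theorem scaledgd_metric_gauge_invariant (m n r : ℕ)
    (X : Matrix (Fin m) (Fin r) ℝ) (Y : Matrix (Fin n) (Fin r) ℝ)
    (hX : X.rank = r) (hY : Y.rank = r)
    (Q : Matrix (Fin r) (Fin r) ℝ) (hQ : IsUnit Q.det)
    (ξX φX : Matrix (Fin m) (Fin r) ℝ) (ξY φY : Matrix (Fin n) (Fin r) ℝ) :
    ((ξX * Q * ((Y * Q⁻¹ᵀ)ᵀ * (Y * Q⁻¹ᵀ)))ᵀ * (φX * Q)).trace
      + ((ξY * Q⁻¹ᵀ * ((X * Q)ᵀ * (X * Q)))ᵀ * (φY * Q⁻¹ᵀ)).trace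
    = ((ξX * (Yᵀ * Y))ᵀ * φX).trace + ((ξY * (Xᵀ * X))ᵀ * φY).trace :=
  scaledgd_metric_gauge_invariant_general m n r X Y Q hQ ξX φX ξY φY
end

section
/- Under the gauge transformation X̃ = XQ, Ỹ = YQ^{−T} with Q ∈ GL(r), the RefLoRA geometric-mean matrix transforms as S̃ = Q^{−1} S Q^{−T}, where S̃ = P̃_X^{−1/2}(P̃_X^{1/2} P̃_Y P̃_X^{1/2})^{1/2} P̃_X^{−1/2} with P̃_X = X̃ᵀX̃, P̃_Y = ỸᵀỸ, and S is defined analogously from P_X = XᵀX, P_Y = YᵀY. -/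
/-!
Both `St` and `Q⁻¹ S Q⁻ᵀ` are positive semidefinite solutions of `T P̃_X T = P̃_Y`, and `P̃_X` is
positive definite because `X Q` still has full column rank. Such solutions are unique: with
`B = P̃_X^{1/2}`, the equation says `(B T B)² = B P̃_Y B`, and a positive semidefinite matrix is
the unique positive semidefinite square root of its square.
-/

open Matrix

theorem Matrix.mulVec_injective_of_rank_eq_card {m n K : Type*} [Fintype n] [Field K]
    {A : Matrix m n K} (h : A.rank = Fintype.card n) : Function.Injective A.mulVec := by
  have hker : Module.finrank K (LinearMap.ker A.mulVecLin) = 0 := by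
    have := LinearMap.finrank_range_add_finrank_ker A.mulVecLin
    rw [← Matrix.rank, h, Module.finrank_fintype_fun_eq_card] at this
    omega
  exact LinearMap.ker_eq_bot.mp (Submodule.finrank_eq_zero.mp hker)

open scoped MatrixOrder ComplexOrder in
theorem Matrix.PosSemidef.eq_of_mul_mul_eq {n 𝕜 : Type*} [Fintype n] [DecidableEq n] [RCLike 𝕜]
    {A S T : Matrix n n 𝕜} (hA : A.PosDef) (hS : S.PosSemidef) (hT : T.PosSemidef)
    (h : S * A * S = T * A * T) : S = T := by
  set B := CFC.sqrt A
  have hBB : B * B = A := CFC.sqrt_mul_sqrt_self A hA.posSemidef.nonneg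
  have hBH : Bᴴ = B := (CFC.sqrt_nonneg A).posSemidef.isHermitian
  have hBu : IsUnit B := (CFC.isUnit_sqrt_iff A hA.posSemidef.nonneg).mpr hA.isUnit
  have hBSB : (B * S * B).PosSemidef := by
    simpa only [hBH] using hS.mul_mul_conjTranspose_same B
  have hBTB : (B * T * B).PosSemidef := by
    simpa only [hBH] using hT.mul_mul_conjTranspose_same B
  have hsq : (B * S * B) ^ 2 = (B * T * B) ^ 2 := by
    have hconj (M : Matrix n n 𝕜) : (B * M * B) ^ 2 = B * (M * A * M) * B := by
      rw [← hBB]; noncomm_ring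
    rw [hconj, hconj, h]
  have hBSB_eq : B * S * B = B * T * B := (CFC.sq_eq_sq_iff _ _ hBSB.nonneg hBTB.nonneg).mp hsq
  exact hBu.mul_left_cancel (hBu.mul_right_cancel hBSB_eq)

theorem Matrix.inv_congr_mul_congr_mul_inv_congr {n R : Type*} [Fintype n] [DecidableEq n]
    [CommRing R] {Q : Matrix n n R} (hQ : IsUnit Q.det) (A S : Matrix n n R) :
    (Q⁻¹ * S * Q⁻¹ᵀ) * (Qᵀ * A * Q) * (Q⁻¹ * S * Q⁻¹ᵀ) = Q⁻¹ * (S * A * S) * Q⁻¹ᵀ := by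
  have hQQ : Q⁻¹ᵀ * Qᵀ = 1 := by rw [← transpose_mul, mul_nonsing_inv _ hQ, transpose_one]
  calc (Q⁻¹ * S * Q⁻¹ᵀ) * (Qᵀ * A * Q) * (Q⁻¹ * S * Q⁻¹ᵀ)
      = Q⁻¹ * S * (Q⁻¹ᵀ * Qᵀ) * A * (Q * Q⁻¹) * S * Q⁻¹ᵀ := by noncomm_ring
    _ = Q⁻¹ * (S * A * S) * Q⁻¹ᵀ := by rw [hQQ, mul_nonsing_inv _ hQ]; noncomm_ring

theorem reflora_S_gauge_transform_general (m n r : ℕ)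
    (X : Matrix (Fin m) (Fin r) ℝ) (Y : Matrix (Fin n) (Fin r) ℝ)
    (hX : X.rank = r)
    (Q : Matrix (Fin r) (Fin r) ℝ) (hQ : IsUnit Q.det)
    (S : Matrix (Fin r) (Fin r) ℝ) (hS : S.PosDef)
    (hSeq : S * (Xᵀ * X) * S = Yᵀ * Y)
    (St : Matrix (Fin r) (Fin r) ℝ) (hSt : St.PosDef)
    (hSteq : St * ((X * Q)ᵀ * (X * Q)) * St = (Y * Q⁻¹ᵀ)ᵀ * (Y * Q⁻¹ᵀ)) :
    St = Q⁻¹ * S * Q⁻¹ᵀ := by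
  have hXQ : Function.Injective (X * Q).mulVec := by
    refine mulVec_injective_of_rank_eq_card ?_
    rw [rank_mul_eq_left_of_isUnit_det Q X hQ, hX, Fintype.card_fin]
  have hPXQ : ((X * Q)ᵀ * (X * Q)).PosDef := by
    simpa only [conjTranspose_eq_transpose_of_trivial] using PosDef.conjTranspose_mul_self _ hXQ
  have hS' : (Q⁻¹ * S * Q⁻¹ᵀ).PosSemidef := by
    simpa only [conjTranspose_eq_transpose_of_trivial] using
      hS.posSemidef.mul_mul_conjTranspose_same Q⁻¹
  have hPX : (X * Q)ᵀ * (X * Q) = Qᵀ * (Xᵀ * X) * Q := by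
    simp only [transpose_mul, Matrix.mul_assoc]
  have hPY : (Y * Q⁻¹ᵀ)ᵀ * (Y * Q⁻¹ᵀ) = Q⁻¹ * (Yᵀ * Y) * Q⁻¹ᵀ := by
    simp only [transpose_mul, transpose_transpose, Matrix.mul_assoc]
  refine hSt.posSemidef.eq_of_mul_mul_eq hPXQ hS' ?_
  rw [hSteq, hPY, hPX, inv_congr_mul_congr_mul_inv_congr hQ, hSeq]

/-- Under the gauge transformation `X̃ = XQ`, `Ỹ = YQ^{−T}`, the RefLoRA
geometric-mean matrix (characterized as the unique SPD solution of `S P_X S = P_Y`)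
transforms as `S̃ = Q⁻¹ S Q^{−T}`. -/
theorem reflora_S_gauge_transform (m n r : ℕ)
    (X : Matrix (Fin m) (Fin r) ℝ) (Y : Matrix (Fin n) (Fin r) ℝ)
    (hX : X.rank = r) (hY : Y.rank = r)
    (Q : Matrix (Fin r) (Fin r) ℝ) (hQ : IsUnit Q.det)
    (S : Matrix (Fin r) (Fin r) ℝ) (hS : S.PosDef)
    (hSeq : S * (Xᵀ * X) * S = Yᵀ * Y)
    (St : Matrix (Fin r) (Fin r) ℝ) (hSt : St.PosDef)
    (hSteq : St * ((X * Q)ᵀ * (X * Q)) * St = (Y * Q⁻¹ᵀ)ᵀ * (Y * Q⁻¹ᵀ)) :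
    St = Q⁻¹ * S * Q⁻¹ᵀ :=
  reflora_S_gauge_transform_general m n r X Y hX Q hQ S hS hSeq St hSt hSteq
end

section
/- Let F(X,Y) = f(XYᵀ) for differentiable f : ℝ^{m×n} → ℝ, and let G_W = ∇f(XYᵀ), so that ∇_X F = G_W Y and ∇_Y F = G_Wᵀ X. For any symmetric positive definite S ∈ ℝ^{r×r}, the update directions ΔX = −η G_W Y S^{−1} and ΔY = −η G_Wᵀ X S are orthogonal to the vertical space: for every U ∈ ℝ^{r×r}, ⟨XU·S, ΔX⟩_F + ⟨−YUᵀ·S^{−1}, ΔY⟩_F = 0. -/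
/-!
Right-multiplying the components of a vertical vector by `S` and `S⁻¹` cancels the `S⁻¹` and `S`
of the update (as `S` is symmetric), so the pairing is `-η (⟨XU, G Y⟩ - ⟨YUᵀ, Gᵀ X⟩)`. Both
Frobenius pairings equal `tr (Uᵀ Xᵀ G Y)`: this is the first-order invariance of `X Yᵀ` under
`(X, Y) ↦ (X (1 + tU), Y (1 - tUᵀ))`.
-/

open Matrix

namespace Matrix

variable {m n r R : Type*} [Fintype m] [Fintype n] [Fintype r] [CommRing R]

theorem trace_transpose_mul_mul_transpose_mul (A B : Matrix m r R) (S T : Matrix r r R) :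
    ((A * S)ᵀ * (B * T)).trace = (Aᵀ * B * (T * Sᵀ)).trace := by
  rw [transpose_mul, Matrix.mul_assoc, trace_mul_comm]
  simp only [Matrix.mul_assoc]

theorem trace_transpose_mul_mul_transpose_comm (X : Matrix m r R) (Y : Matrix n r R)
    (G : Matrix m n R) (U : Matrix r r R) :
    ((X * U)ᵀ * (G * Y)).trace = ((Y * Uᵀ)ᵀ * (Gᵀ * X)).trace := by
  rw [← trace_transpose]
  simpa only [transpose_mul, transpose_transpose, Matrix.mul_assoc]
    using trace_mul_comm (Yᵀ * Gᵀ * X) U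

end Matrix

/-- The RefLoRA update directions `ΔX = −η G_W Y S⁻¹`, `ΔY = −η G_Wᵀ X S` are
orthogonal (in the metric `⟨ξ_X S, φ_X⟩_F + ⟨ξ_Y S⁻¹, φ_Y⟩_F`) to every vertical
direction `(XU, −YUᵀ)`. -/
theorem update_orthogonal_to_vertical (m n r : ℕ) (η : ℝ)
    (X : Matrix (Fin m) (Fin r) ℝ) (Y : Matrix (Fin n) (Fin r) ℝ)
    (GW : Matrix (Fin m) (Fin n) ℝ)
    (S : Matrix (Fin r) (Fin r) ℝ) (hS : S.PosDef) :
    ∀ U : Matrix (Fin r) (Fin r) ℝ,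
      ((X * U * S)ᵀ * (-η • (GW * Y * S⁻¹))).trace
        + ((-(Y * Uᵀ) * S⁻¹)ᵀ * (-η • (GWᵀ * X * S))).trace = 0 := by
  intro U
  have hSymm : Sᵀ = S := hS.isHermitian.eq
  have hS_unit : IsUnit S.det := S.isUnit_iff_isUnit_det.mp hS.isUnit
  rw [Matrix.mul_smul, Matrix.mul_smul, trace_smul, trace_smul,
    trace_transpose_mul_mul_transpose_mul, trace_transpose_mul_mul_transpose_mul,
    transpose_nonsing_inv, hSymm, nonsing_inv_mul S hS_unit, mul_nonsing_inv S hS_unit,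
    Matrix.mul_one, Matrix.mul_one, transpose_neg, Matrix.neg_mul, trace_neg,
    ← trace_transpose_mul_mul_transpose_comm, smul_neg, add_neg_cancel]
end
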